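/- Let p be a prime with p ≥ 5, let λ, μ ∈ 𝔽_p be nonzero, and take coefficients a = 1, b = λ, c = μ, so that φ(S) = (∑_{x∈S} x)² + λ·(∑_{x∈S} x²) + μ·(∑_{x∈S} x). Let s be a positive integer such that for every integer i with 1 ≤ i ≤ s, the reduction of i modulo p is a nonzero square in 𝔽_p. Then p + s ≤ D(φ,p) ≤ 2p − 1. -/
import Mathlib


/-- `phi a b c S = a·(∑_{x∈S} x)² + b·(∑_{x∈S} x²) + c·(∑_{x∈S} x)`,
sums taken with multiplicity. -/
def phi {p : ℕ} (a b c : ZMod p) (S : Multiset (ZMod p)) : ZMod p :=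
  a * S.sum ^ 2 + b * (S.map (fun x => x ^ 2)).sum + c * S.sum

/-- `S` is φ-zero-free: no nonempty submultiset `T` of `S` has `phi a b c T = 0`. -/
def PhiZeroFree {p : ℕ} (a b c : ZMod p) (S : Multiset (ZMod p)) : Prop :=
  ∀ T : Multiset (ZMod p), T ≤ S → T ≠ 0 → phi a b c T ≠ 0

/-- The set of positive lengths `ℓ` such that every multiset over `ZMod p` of
cardinality at least `ℓ` has a nonempty submultiset `T` with `phi a b c T = 0`.
The Davenport φ-constant `D(φ,p)` is the least element of this set. -/
def DavSet {p : ℕ} (a b c : ZMod p) : Set ℕ :=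
  {ℓ : ℕ | 0 < ℓ ∧ ∀ S : Multiset (ZMod p), ℓ ≤ Multiset.card S →
    ∃ T : Multiset (ZMod p), T ≤ S ∧ T ≠ 0 ∧ phi a b c T = 0}

open MvPolynomial Finset

lemma phi_upper (p : ℕ) (hp : p.Prime) (a b c : ZMod p) (S : Multiset (ZMod p))
    (hS : 2 * p - 1 ≤ Multiset.card S) :
    ∃ T : Multiset (ZMod p), T ≤ S ∧ T ≠ 0 ∧ phi a b c T = 0 := by
  haveI : Fact p.Prime := ⟨hp⟩
  have hp2 : 2 ≤ p := hp.two_le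
  obtain ⟨n, hn⟩ : ∃ m : ℕ, m = 2 * p - 1 := ⟨_, rfl⟩
  have hSn : n ≤ Multiset.card S := by omega
  set l : List (ZMod p) := S.toList.take n with hl
  have hlen : l.length = n := by
    simp only [hl, List.length_take, Multiset.length_toList]
    omega
  have hlS : (l : Multiset (ZMod p)) ≤ S := by
    have h1 := List.take_sublist n S.toList
    have := Multiset.coe_le.mpr h1.subperm
    simpa [Multiset.coe_toList] using this
  set v : Fin n → ZMod p := fun i => l.get (Fin.cast hlen.symm i) with hv
  have hvl : (Finset.univ.val.map v : Multiset (ZMod p)) = (l : Multiset (ZMod p)) := by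
    have h2 : List.map v (List.finRange n) = l := by
      apply List.ext_get
      · simp [hlen]
      · intro i h1 h2
        simp [hv]
    calc (Finset.univ.val.map v : Multiset (ZMod p))
        = ((List.finRange n).map v : List (ZMod p)) := by
          simp [Finset.univ, Fintype.elems, Multiset.map_coe]
      _ = (l : Multiset (ZMod p)) := by rw [h2]
  set L1 : MvPolynomial (Fin n) (ZMod p) := ∑ i, C (v i) * X i ^ (p - 1) with hL1
  set L2 : MvPolynomial (Fin n) (ZMod p) := ∑ i, C (v i ^ 2) * X i ^ (p - 1) with hL2
  set F : MvPolynomial (Fin n) (ZMod p) := C a * L1 ^ 2 + (C b * L2 + C c * L1) with hF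
  have hdegterm : ∀ w : ZMod p, ∀ i : Fin n,
      (C w * X i ^ (p - 1) : MvPolynomial (Fin n) (ZMod p)).totalDegree ≤ p - 1 := by
    intro w i
    refine le_trans (totalDegree_mul _ _) ?_
    have h3 : (C w : MvPolynomial (Fin n) (ZMod p)).totalDegree = 0 := totalDegree_C w
    have h4 : (X i ^ (p - 1) : MvPolynomial (Fin n) (ZMod p)).totalDegree = p - 1 :=
      totalDegree_X_pow i (p - 1)
    omega
  have hdeg1 : L1.totalDegree ≤ p - 1 :=
    le_trans (totalDegree_finset_sum _ _) (Finset.sup_le fun i _ => hdegterm _ i)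
  have hdeg2 : L2.totalDegree ≤ p - 1 :=
    le_trans (totalDegree_finset_sum _ _) (Finset.sup_le fun i _ => hdegterm _ i)
  have hdeg : F.totalDegree < Fintype.card (Fin n) := by
    rw [Fintype.card_fin]
    have h1 : F.totalDegree ≤ 2 * (p - 1) := by
      refine le_trans (totalDegree_add _ _)
        (max_le ?_ (le_trans (totalDegree_add _ _) (max_le ?_ ?_)))
      · refine le_trans (totalDegree_mul _ _) ?_
        have h2 := totalDegree_pow L1 2
        have h3 : (C a : MvPolynomial (Fin n) (ZMod p)).totalDegree = 0 := totalDegree_C a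
        omega
      · refine le_trans (totalDegree_mul _ _) ?_
        have h3 : (C b : MvPolynomial (Fin n) (ZMod p)).totalDegree = 0 := totalDegree_C b
        omega
      · refine le_trans (totalDegree_mul _ _) ?_
        have h3 : (C c : MvPolynomial (Fin n) (ZMod p)).totalDegree = 0 := totalDegree_C c
        omega
    omega
  have hdvd := char_dvd_card_solutions p hdeg
  have hzero : eval (0 : Fin n → ZMod p) F = 0 := by
    have hpow : (0 : ZMod p) ^ (p - 1) = 0 := zero_pow (by omega)
    simp [hF, hL1, hL2, eval_sum, hpow]
  have hpos : 0 < Fintype.card { x : Fin n → ZMod p // eval x F = 0 } :=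
    Fintype.card_pos_iff.mpr ⟨⟨0, hzero⟩⟩
  have hcard : 1 < Fintype.card { x : Fin n → ZMod p // eval x F = 0 } := by
    have h6 := Nat.le_of_dvd hpos hdvd
    exact lt_of_lt_of_le (by omega : 1 < p) h6
  obtain ⟨⟨ε, hε⟩, hεne⟩ := Fintype.exists_ne_of_one_lt_card hcard
    (⟨0, hzero⟩ : { x : Fin n → ZMod p // eval x F = 0 })
  have hεne0 : ε ≠ 0 := by
    intro h; apply hεne; exact Subtype.ext h
  have hind : ∀ i : Fin n, ε i ^ (p - 1) = if ε i ≠ 0 then 1 else 0 := by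
    intro i
    by_cases h : ε i = 0
    · rw [h, if_neg (by simp)]
      exact zero_pow (by omega)
    · simp [h, ZMod.pow_card_sub_one_eq_one h]
  set T : Multiset (ZMod p) := (Finset.univ.filter (fun i => ε i ≠ 0)).val.map v with hT
  have hsum : ∀ g : ZMod p → ZMod p, (T.map g).sum = ∑ i with ε i ≠ 0, g (v i) := by
    intro g
    simp only [hT, Multiset.map_map, Function.comp]
    rfl
  have hsum1 : T.sum = ∑ i with ε i ≠ 0, v i := by
    have := hsum id
    simpa using this
  refine ⟨T, ?_, ?_, ?_⟩
  · refine le_trans ?_ hlS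
    rw [← hvl]
    exact Multiset.map_le_map (Finset.val_le_iff.mpr (Finset.filter_subset _ _))
  · intro h
    obtain ⟨i, hi⟩ := Function.ne_iff.mp hεne0
    have h5 : i ∈ Finset.univ.filter (fun i => ε i ≠ 0) := by
      simp only [Finset.mem_filter, Finset.mem_univ, true_and]
      simpa using hi
    have : v i ∈ T := by
      rw [hT]; exact Multiset.mem_map_of_mem v (by simpa using h5)
    simp [h] at this
  · have e1 : eval ε L1 = T.sum := by
      rw [hsum1, hL1]
      simp only [eval_sum, eval_mul, eval_C, eval_pow, eval_X]
      rw [Finset.sum_filter]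
      congr 1; ext i
      rw [hind i]
      split <;> simp
    have e2 : eval ε L2 = (T.map (fun x => x ^ 2)).sum := by
      rw [hsum (fun x => x ^ 2), hL2]
      simp only [eval_sum, eval_mul, eval_C, eval_pow, eval_X]
      rw [Finset.sum_filter]
      congr 1; ext i
      rw [hind i]
      split <;> simp
    have : eval ε F = phi a b c T := by
      simp only [hF, phi, map_add, map_mul, eval_C, map_pow, e1, e2]
      ring
    rw [← this, hε]

lemma exists_nonsquare_val (p : ℕ) (hp : p.Prime) (hp5 : 5 ≤ p)
    (lam mu : ZMod p) (hlam : lam ≠ 0) (hmu : mu ≠ 0) :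
    ∃ y : ZMod p, ¬ IsSquare (-lam * y ^ 2 - mu * y) := by
  haveI : Fact p.Prime := ⟨hp⟩
  classical
  by_contra hall
  push_neg at hall
  have h4 : (4 : ZMod p) ≠ 0 := by
    have : ((4 : ℕ) : ZMod p) ≠ 0 := by
      rw [Ne, ZMod.natCast_eq_zero_iff]
      intro hd
      have := Nat.le_of_dvd (by norm_num) hd
      omega
    simpa using this
  have h2 : (2 : ZMod p) ≠ 0 := by
    intro h
    apply h4
    have : (4 : ZMod p) = 2 * 2 := by norm_num
    rw [this, h]; ring
  have h3 : (3 : ZMod p) ≠ 0 := by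
    have : ((3 : ℕ) : ZMod p) ≠ 0 := by
      rw [Ne, ZMod.natCast_eq_zero_iff]
      intro hd
      have := Nat.le_of_dvd (by norm_num) hd
      have hdd := (Nat.prime_dvd_prime_iff_eq hp (by norm_num)).mp hd
      omega
    simpa using this
  set c : ZMod p := mu ^ 2 * (4 * lam)⁻¹ with hc
  have hcne : c ≠ 0 := by
    simp only [hc]
    apply mul_ne_zero (pow_ne_zero _ hmu)
    exact inv_ne_zero (mul_ne_zero h4 hlam)
  set Sq : Finset (ZMod p) := univ.filter (fun t => IsSquare t) with hSq
  -- f maps Sq into Sq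
  set f : ZMod p → ZMod p := fun t => c - lam * t with hf
  have hfinj : Function.Injective f := by
    intro x y hxy
    simp only [hf] at hxy
    have : lam * x = lam * y := by linear_combination -hxy
    exact mul_left_cancel₀ hlam this
  have hfmem : ∀ t ∈ Sq, f t ∈ Sq := by
    intro t ht
    simp only [hSq, mem_filter, mem_univ, true_and] at ht ⊢
    obtain ⟨r, hr⟩ := ht
    have key : f t = -lam * (r - mu * (2 * lam)⁻¹) ^ 2 - mu * (r - mu * (2 * lam)⁻¹) := by
      simp only [hf, hc, hr]
      field_simp
      ring
    rw [key]
    exact hall _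
  have himg : Sq.image f = Sq := by
    apply Finset.eq_of_subset_of_card_le
    · intro x hx
      obtain ⟨t, ht, rfl⟩ := Finset.mem_image.mp hx
      exact hfmem t ht
    · rw [Finset.card_image_of_injective _ hfinj]
  -- sum of squares is zero
  have hsum0 : ∑ t ∈ Sq, t = 0 := by
    set g : ZMod p → ZMod p := fun t => 4 * t with hg
    have hginj : Function.Injective g := fun x y hxy =>
      mul_left_cancel₀ h4 hxy
    have hgmem : ∀ t ∈ Sq, g t ∈ Sq := by
      intro t ht
      simp only [hSq, mem_filter, mem_univ, true_and] at ht ⊢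
      obtain ⟨r, hr⟩ := ht
      exact ⟨2 * r, by rw [hg]; simp only [hr]; ring⟩
    have hgimg : Sq.image g = Sq := by
      apply Finset.eq_of_subset_of_card_le
      · intro x hx
        obtain ⟨t, ht, rfl⟩ := Finset.mem_image.mp hx
        exact hgmem t ht
      · rw [Finset.card_image_of_injective _ hginj]
    have : ∑ t ∈ Sq, t = ∑ t ∈ Sq, g t := by
      conv_lhs => rw [← hgimg]
      rw [Finset.sum_image (fun x _ y _ h => hginj h)]
    have h5 : (3 : ZMod p) * ∑ t ∈ Sq, t = 0 := by
      simp only [hg] at this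
      have h6 := Finset.mul_sum Sq (fun t => t) (4 : ZMod p)
      linear_combination h6 - this
    have := mul_eq_zero.mp h5
    tauto
  -- sum over image
  have hsumf : ∑ t ∈ Sq, f t = ∑ t ∈ Sq, t := by
    conv_rhs => rw [← himg]
    rw [Finset.sum_image (fun x _ y _ h => hfinj h)]
  have hkey : (Sq.card : ZMod p) * c = 0 := by
    have : ∑ t ∈ Sq, f t = (Sq.card : ZMod p) * c - lam * ∑ t ∈ Sq, t := by
      simp only [hf, Finset.sum_sub_distrib, Finset.sum_const, nsmul_eq_mul]
      rw [Finset.mul_sum]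
    rw [hsumf, hsum0] at this
    simpa using this.symm
  have hcard0 : (Sq.card : ZMod p) = 0 := by
    rcases mul_eq_zero.mp hkey with h | h
    · exact h
    · exact absurd h hcne
  have hdvd : p ∣ Sq.card := (ZMod.natCast_eq_zero_iff _ _).mp hcard0
  have hpos : 0 < Sq.card := Finset.card_pos.mpr ⟨1, by simp [hSq]⟩
  have hlt : Sq.card < p := by
    obtain ⟨w, hw⟩ := FiniteField.exists_nonsquare (F := ZMod p)
      (by rw [ZMod.ringChar_zmod_n]; omega)
    have : Sq ⊂ univ := by
      refine Finset.ssubset_univ_iff.mpr ?_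
      intro h
      have : w ∈ Sq := by rw [h]; exact mem_univ w
      simp [hSq] at this
      exact hw this
    have := Finset.card_lt_card this
    simpa [ZMod.card p] using this
  have := Nat.le_of_dvd hpos hdvd
  omega

lemma zero_free_exists (p : ℕ) (hp : p.Prime) (hp5 : 5 ≤ p)
    (lam mu : ZMod p) (hlam : lam ≠ 0) (hmu : mu ≠ 0)
    (s : ℕ) (hs : 0 < s)
    (hsq : ∀ i : ℕ, 1 ≤ i → i ≤ s → (i : ZMod p) ≠ 0 ∧ IsSquare (i : ZMod p)) :
    ∃ S : Multiset (ZMod p), Multiset.card S = p + s - 1 ∧ PhiZeroFree 1 lam mu S := by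
  haveI : Fact p.Prime := ⟨hp⟩
  have hp2 : 2 ≤ p := hp.two_le
  obtain ⟨y, hy⟩ := exists_nonsquare_val p hp hp5 lam mu hlam hmu
  set x₀ : ZMod p := -mu * lam⁻¹ with hx₀def
  have hx₀ : lam * x₀ + mu = 0 := by
    rw [hx₀def]
    field_simp
    ring
  have hx₀ne : x₀ ≠ 0 := by
    rw [hx₀def]
    exact mul_ne_zero (neg_ne_zero.mpr hmu) (inv_ne_zero hlam)
  have hyx₀ : y ≠ x₀ := by
    intro h
    apply hy
    rw [h]
    have : -lam * x₀ ^ 2 - mu * x₀ = 0 := by linear_combination (-x₀) * hx₀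
    rw [this]
    exact ⟨0, by ring⟩
  set S : Multiset (ZMod p) :=
    Multiset.replicate (p - 1) x₀ + Multiset.replicate s y with hSdef
  refine ⟨S, ?_, ?_⟩
  · simp [hSdef]
    omega
  intro T hTS hT0 hphi
  set k : ℕ := T.count x₀ with hk
  set j : ℕ := T.count y with hj
  have hkle : k ≤ p - 1 := by
    have := Multiset.count_le_of_le x₀ hTS
    simpa [hSdef, Multiset.count_replicate, hyx₀, hyx₀.symm] using this
  have hjle : j ≤ s := by
    have := Multiset.count_le_of_le y hTS
    simpa [hSdef, Multiset.count_replicate, hyx₀, hyx₀.symm] using this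
  have hTeq : T = Multiset.replicate k x₀ + Multiset.replicate j y := by
    ext z
    simp only [Multiset.count_add, Multiset.count_replicate]
    by_cases hz1 : z = x₀
    · subst hz1
      simp [hyx₀, hyx₀.symm, hk]
    · by_cases hz2 : z = y
      · subst hz2
        simp [hyx₀, hyx₀.symm, hj]
      · have := Multiset.count_le_of_le z hTS
        simp only [hSdef, Multiset.count_add, Multiset.count_replicate] at this
        simp only [hz1, hz2, Ne.symm hz1, Ne.symm hz2, if_false,
          if_neg (Ne.symm hz1), if_neg (Ne.symm hz2), if_neg hz1, if_neg hz2] at this ⊢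
        omega
  have hkj : 0 < k + j := by
    by_contra h
    push_neg at h
    apply hT0
    rw [hTeq]
    have hk0 : k = 0 := by omega
    have hj0 : j = 0 := by omega
    simp [hk0, hj0]
  -- compute phi
  have hsum : T.sum = (k : ZMod p) * x₀ + (j : ZMod p) * y := by
    rw [hTeq]
    simp [Multiset.sum_replicate, nsmul_eq_mul]
  have hsum2 : (T.map (fun x => x ^ 2)).sum = (k : ZMod p) * x₀ ^ 2 + (j : ZMod p) * y ^ 2 := by
    rw [hTeq]
    simp [Multiset.map_replicate, Multiset.sum_replicate, nsmul_eq_mul]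
  set K : ZMod p := (k : ZMod p) with hK
  set J : ZMod p := (j : ZMod p) with hJ
  have hphi' : (K * x₀ + J * y) ^ 2 + J * (lam * y ^ 2 + mu * y) = 0 := by
    have : phi 1 lam mu T = (K * x₀ + J * y) ^ 2 + J * (lam * y ^ 2 + mu * y) := by
      rw [phi, hsum, hsum2]
      linear_combination (K * x₀) * hx₀
    rw [← this, hphi]
  rcases Nat.eq_zero_or_pos j with hj0 | hj1
  · -- j = 0 : K * x₀ ≠ 0
    have hk1 : 1 ≤ k := by omega
    have hKne : K ≠ 0 := by
      rw [hK, Ne, ZMod.natCast_eq_zero_iff]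
      intro hd
      have := Nat.le_of_dvd (by omega) hd
      omega
    have hJ0 : J = 0 := by simp [hJ, hj0]
    rw [hJ0] at hphi'
    simp only [mul_zero, zero_mul, add_zero] at hphi'
    exact (pow_ne_zero 2 (mul_ne_zero hKne hx₀ne)) hphi'
  · -- j ≥ 1 : contradiction with nonsquare
    obtain ⟨hJne, hJsq⟩ := hsq j hj1 hjle
    rw [← hJ] at hJne hJsq
    obtain ⟨r, hr⟩ := hJsq
    have hrne : r ≠ 0 := by
      intro h; apply hJne; rw [hr, h]; ring
    apply hy
    refine ⟨(K * x₀ + J * y) * r⁻¹, ?_⟩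
    have hru : r * r⁻¹ = 1 := mul_inv_cancel₀ hrne
    field_simp
    linear_combination -hphi' + (lam * y^2 + mu*y) * hr

/-- Theorem 4.5: for a prime `p ≥ 5`, nonzero `λ, μ ∈ 𝔽_p` and
`φ(S) = (∑x)² + λ(∑x²) + μ(∑x)`, if every integer `i` with `1 ≤ i ≤ s` reduces to
a nonzero square modulo `p`, then `p + s ≤ D(φ,p) ≤ 2p - 1`. -/
theorem davenport_phi_lower_bound (p : ℕ) (hp : p.Prime) (hp5 : 5 ≤ p)
    (lam mu : ZMod p) (hlam : lam ≠ 0) (hmu : mu ≠ 0)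
    (s : ℕ) (hs : 0 < s)
    (hsq : ∀ i : ℕ, 1 ≤ i → i ≤ s → (i : ZMod p) ≠ 0 ∧ IsSquare (i : ZMod p)) :
    ∃ D : ℕ, IsLeast (DavSet (1 : ZMod p) lam mu) D ∧
      p + s ≤ D ∧ D ≤ 2 * p - 1 := by
  have hp2 : 2 ≤ p := hp.two_le
  have hmem : (2 * p - 1) ∈ DavSet (1 : ZMod p) lam mu :=
    ⟨by omega, fun S hS => phi_upper p hp 1 lam mu S hS⟩
  have hne : (DavSet (1 : ZMod p) lam mu).Nonempty := ⟨2 * p - 1, hmem⟩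
  refine ⟨sInf (DavSet (1 : ZMod p) lam mu),
    ⟨Nat.sInf_mem hne, fun ℓ hℓ => Nat.sInf_le hℓ⟩, ?_, Nat.sInf_le hmem⟩
  obtain ⟨S₀, hcard, hfree⟩ := zero_free_exists p hp hp5 lam mu hlam hmu s hs hsq
  by_contra h
  push_neg at h
  obtain ⟨hpos, hall⟩ := Nat.sInf_mem hne
  obtain ⟨T, hTS, hT0, hphi⟩ := hall S₀ (by omega)
  exact hfree T hTS hT0 hphi
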